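/- arXiv:math/0512467 — 2 statements merged into one kernel-verified Lean document; each statement's English description precedes it below -/
import Mathlib

section
/- Let A be a commutative ℚ-algebra and let H(z) = z - Σ_{j≥2} B_j z^{1-j} and L(ζ) = ζ + Σ_{j≥2} R_j ζ^{1-j} be formal series at infinity over A that are compositional inverses of each other (H(L(ζ)) = ζ). Then for every integer k ≥ 1, the coefficient R_{k+1} of L satisfies R_{k+1} = -(1/k) · [z^{-1}] H(z)^k, where [z^{-1}] denotes the residue (coefficient of z^{-1}). -/
noncomputable section

variable {A : Type*}

/-- The formal derivative `d/dz` of a formal series at infinity. A series at infinity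
`f(z) = Σ_{n ≤ N} a_n z^n` is modeled as a `LaurentSeries` in the variable `w = 1/z`,
so that the coefficient of `z^n` is `f.coeff (-n)`; the derivative satisfies
`(derivZ f).coeff m = (1 - m) • f.coeff (m - 1)`. -/
noncomputable def derivZ [CommRing A] (f : LaurentSeries A) : LaurentSeries A where
  coeff m := (1 - m) • f.coeff (m - 1)
  isPWO_support' := by
    refine (f.isPWO_support.image_of_monotone (f := fun n => n + 1)
      (fun a b hab => by simpa using hab)).mono ?_
    intro m hm
    have hf : f.coeff (m - 1) ≠ 0 := by
      intro h
      simp [Function.mem_support, h] at hm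
    exact ⟨m - 1, by simpa [HahnSeries.mem_support] using hf, by ring⟩

/-- `IsSumOf g F` asserts that the formal series at infinity `g` is the coefficientwise
convergent sum `Σ_{r ≥ 0} F r`: for each coefficient, the partial sums eventually stabilize. -/
def IsSumOf [CommRing A] (g : LaurentSeries A) (F : ℕ → LaurentSeries A) : Prop :=
  ∀ m : ℤ, ∃ N : ℕ, ∀ n : ℕ, N ≤ n → g.coeff m = (∑ r ∈ Finset.range n, F r).coeff m

/-!
Write `ζ = z` and `ε = L - ζ`, so that the hypothesis says that the Taylor series
`Σ_r ε^r/r! · H^{(r)}` of `H(ζ + ε)` sums to `ζ`. Taylor expansion is multiplicative (general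
Leibniz rule plus a Cauchy product of coefficientwise convergent sums, which works because the
`r`-th term has order at least `r` in `w = 1/z`), so the Taylor series of `H^k` sums to `ζ^k`.
Multiplied by `L' = 1 + ε'`, its partial sums telescope to `H^k` plus an exact derivative plus a
term of high order; derivatives have no residue, whence `Res ζ^k L' = Res H^k`. Finally
`Res ζ^k L' = -k R_{k+1}`.
-/

open Finset Filter HahnSeries

namespace HahnSeries

theorem le_orderTop_sum {Γ R ι : Type*} [LinearOrder Γ] [AddCommMonoid R] {s : Finset ι}
    {f : ι → HahnSeries Γ R} {c : WithTop Γ} (h : ∀ i ∈ s, c ≤ (f i).orderTop) :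
    c ≤ (∑ i ∈ s, f i).orderTop :=
  Finset.sum_induction f (fun x => c ≤ x.orderTop)
    (fun _ _ hx hy => (le_min hx hy).trans min_orderTop_le_orderTop_add) (by simp) h

theorem coe_add_le_orderTop_mul {Γ R : Type*} [AddCommMonoid Γ] [LinearOrder Γ]
    [IsOrderedCancelAddMonoid Γ] [NonUnitalNonAssocSemiring R] {x y : HahnSeries Γ R} {a b : Γ}
    (hx : (a : WithTop Γ) ≤ x.orderTop) (hy : (b : WithTop Γ) ≤ y.orderTop) :
    ((a + b : Γ) : WithTop Γ) ≤ (x * y).orderTop := by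
  rw [WithTop.coe_add]
  exact (add_le_add hx hy).trans orderTop_add_le_mul

end HahnSeries

theorem AddMonoidHom.iterate_map_mul_of_leibniz {B : Type*} [CommSemiring B] (D : B →+ B)
    (hD : ∀ a b, D (a * b) = D a * b + a * D b) (n : ℕ) (a b : B) :
    D^[n] (a * b) = ∑ i ∈ Finset.range (n + 1), n.choose i • (D^[i] a * D^[n - i] b) := by
  induction n with
  | zero => simp
  | succ n ih =>
    rw [Function.iterate_succ_apply', ih, map_sum,
      sum_choose_succ_nsmul (fun i j => D^[i] a * D^[j] b), ← sum_add_distrib]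
    refine sum_congr rfl fun i hi => ?_
    rw [map_nsmul, hD, ← Function.iterate_succ_apply' D, ← Function.iterate_succ_apply' D,
      ← Nat.succ_sub (Nat.lt_succ_iff.1 (Finset.mem_range.1 hi)), add_comm, nsmul_add]

section IsSumOf

variable [CommRing A]

theorem IsSumOf.coe_le_orderTop {g : LaurentSeries A} {s : ℕ → LaurentSeries A} {a : ℤ}
    (hg : IsSumOf g s) (hs : ∀ r : ℕ, (a : WithTop ℤ) ≤ (s r).orderTop) :
    (a : WithTop ℤ) ≤ g.orderTop := by
  refine le_orderTop_iff_forall.2 fun j hj => ?_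
  obtain ⟨n, hn⟩ := hg j
  rw [hn n le_rfl]
  exact coeff_eq_zero_of_lt_orderTop (hj.trans_le (le_orderTop_sum fun r _ => hs r))

theorem IsSumOf.eventually_coe_le_orderTop_sub {g : LaurentSeries A}
    {s : ℕ → LaurentSeries A} {a : ℤ} (hg : IsSumOf g s)
    (hs : ∀ r : ℕ, (a : WithTop ℤ) ≤ (s r).orderTop) (c : ℤ) :
    ∀ᶠ n in atTop, (c : WithTop ℤ) ≤ (g - ∑ r ∈ range n, s r).orderTop := by
  have hcoeff (j : ℤ) : ∀ᶠ n in atTop, g.coeff j = (∑ r ∈ range n, s r).coeff j :=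
    eventually_atTop.2 (hg j)
  filter_upwards [(eventually_all_finset (Ico a c)).2 fun j _ => hcoeff j] with n hn
  refine le_orderTop_iff_forall.2 fun j hj => ?_
  rw [coeff_sub, sub_eq_zero]
  by_cases hja : j < a
  · have hlt : (j : WithTop ℤ) < a := WithTop.coe_lt_coe.2 hja
    rw [coeff_eq_zero_of_lt_orderTop (hlt.trans_le (hg.coe_le_orderTop hs)),
      coeff_eq_zero_of_lt_orderTop (hlt.trans_le (le_orderTop_sum fun r _ => hs r))]
  · exact hn j (mem_Ico.2 ⟨not_lt.1 hja, WithTop.coe_lt_coe.1 hj⟩)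

theorem isSumOf_of_eventually_coe_le_orderTop_sub {g : LaurentSeries A}
    {s : ℕ → LaurentSeries A}
    (h : ∀ c : ℤ, ∀ᶠ n in atTop,
      (c : WithTop ℤ) ≤ (g - ∑ r ∈ range n, s r).orderTop) :
    IsSumOf g s := fun m =>
  eventually_atTop.1 <| (h (m + 1)).mono fun n hn => sub_eq_zero.1 <| by
    rw [← coeff_sub]
    exact coeff_eq_zero_of_lt_orderTop ((WithTop.coe_lt_coe.2 (lt_add_one m)).trans_le hn)

theorem coe_le_orderTop_sum_range_sub_sum_range {t : ℕ → LaurentSeries A} {b : ℤ}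
    (ht : ∀ r : ℕ, ((b + r : ℤ) : WithTop ℤ) ≤ (t r).orderTop) {p n : ℕ}
    (hpn : p ≤ n) :
    ((b + p : ℤ) : WithTop ℤ) ≤
      (∑ r ∈ range n, t r - ∑ r ∈ range p, t r).orderTop := by
  rw [← sum_Ico_eq_sub _ hpn]
  refine le_orderTop_sum fun r hr => (WithTop.coe_le_coe.2 ?_).trans (ht r)
  have := (mem_Ico.1 hr).1
  omega

theorem coe_le_orderTop_sum_range_mul_sum_range_sub {s t : ℕ → LaurentSeries A} {a b : ℤ}
    (hs : ∀ r : ℕ, ((a + r : ℤ) : WithTop ℤ) ≤ (s r).orderTop)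
    (ht : ∀ r : ℕ, ((b + r : ℤ) : WithTop ℤ) ≤ (t r).orderTop) (n : ℕ) :
    ((a + b + n : ℤ) : WithTop ℤ) ≤ ((∑ r ∈ range n, s r) * ∑ r ∈ range n, t r -
      ∑ m ∈ range n, ∑ k ∈ range (m + 1), s k * t (m - k)).orderTop := by
  rw [sum_range_diag_flip n fun i j => s i * t j, sum_mul, ← sum_sub_distrib]
  refine le_orderTop_sum fun i hi => ?_
  have hin : i ≤ n := (mem_range.1 hi).le
  rw [← mul_sum, ← mul_sub]
  convert coe_add_le_orderTop_mul (hs i) (coe_le_orderTop_sum_range_sub_sum_range ht (n.sub_le i))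
    using 2
  push_cast [Nat.cast_sub hin]
  ring

theorem IsSumOf.mul {F G : LaurentSeries A} {s t : ℕ → LaurentSeries A} {a b : ℤ}
    (hF : IsSumOf F s) (hG : IsSumOf G t)
    (hs : ∀ r : ℕ, ((a + r : ℤ) : WithTop ℤ) ≤ (s r).orderTop)
    (ht : ∀ r : ℕ, ((b + r : ℤ) : WithTop ℤ) ≤ (t r).orderTop) :
    IsSumOf (F * G) fun m => ∑ k ∈ range (m + 1), s k * t (m - k) := by
  have hs' (r : ℕ) : (a : WithTop ℤ) ≤ (s r).orderTop :=
    (WithTop.coe_le_coe.2 (by omega)).trans (hs r)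
  have ht' (r : ℕ) : (b : WithTop ℤ) ≤ (t r).orderTop :=
    (WithTop.coe_le_coe.2 (by omega)).trans (ht r)
  refine isSumOf_of_eventually_coe_le_orderTop_sub fun c => ?_
  filter_upwards [hF.eventually_coe_le_orderTop_sub hs' (c - b),
    hG.eventually_coe_le_orderTop_sub ht' (c - a), eventually_ge_atTop (c - a - b).toNat]
    with n hFn hGn hn
  set S := ∑ r ∈ range n, s r
  set T := ∑ r ∈ range n, t r
  set C := ∑ m ∈ range n, ∑ k ∈ range (m + 1), s k * t (m - k)
  have hsplit : F * G - C = (F - S) * G + S * (G - T) + (S * T - C) := by ring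
  have h₁ : (c : WithTop ℤ) ≤ ((F - S) * G).orderTop := by
    simpa using coe_add_le_orderTop_mul hFn (hG.coe_le_orderTop ht')
  have h₂ : (c : WithTop ℤ) ≤ (S * (G - T)).orderTop := by
    simpa using coe_add_le_orderTop_mul (le_orderTop_sum (s := range n) fun r _ => hs' r) hGn
  have h₃ : (c : WithTop ℤ) ≤ _ := (WithTop.coe_le_coe.2 (by omega)).trans
    (coe_le_orderTop_sum_range_mul_sum_range_sub hs ht n)
  rw [hsplit]
  exact (le_min (le_min h₁ h₂) h₃).trans
    ((min_le_min_right _ min_orderTop_le_orderTop_add).trans min_orderTop_le_orderTop_add)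

end IsSumOf

section derivZ

variable [CommRing A]

theorem derivZ_coeff (f : LaurentSeries A) (m : ℤ) :
    (derivZ f).coeff m = (1 - m) • f.coeff (m - 1) := rfl

theorem derivZ_coeff_one (f : LaurentSeries A) : (derivZ f).coeff 1 = 0 := by
  simp [derivZ_coeff]

theorem derivZ_add (f g : LaurentSeries A) : derivZ (f + g) = derivZ f + derivZ g := by
  ext m
  simp only [derivZ_coeff, coeff_add, smul_add]

theorem derivZ_zero : derivZ (0 : LaurentSeries A) = 0 :=
  map_zero (AddMonoidHom.mk' derivZ derivZ_add)

theorem coe_add_one_le_orderTop_derivZ {f : LaurentSeries A} {a : ℤ}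
    (hf : (a : WithTop ℤ) ≤ f.orderTop) :
    ((a + 1 : ℤ) : WithTop ℤ) ≤ (derivZ f).orderTop := by
  rw [le_orderTop_iff_forall] at hf ⊢
  intro j hj
  rw [derivZ_coeff, hf (j - 1) (WithTop.coe_lt_coe.2 (by have := WithTop.coe_lt_coe.1 hj; omega)),
    smul_zero]

theorem coe_add_le_orderTop_iterate_derivZ {f : LaurentSeries A} {a : ℤ}
    (hf : (a : WithTop ℤ) ≤ f.orderTop) (r : ℕ) :
    ((a + r : ℤ) : WithTop ℤ) ≤ (derivZ^[r] f).orderTop := by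
  induction r with
  | zero => simpa using hf
  | succ r ih =>
    rw [Function.iterate_succ_apply']
    simpa [add_assoc] using coe_add_one_le_orderTop_derivZ ih

/-- The Euler operator `w d/dw` in the variable `w = 1/z`. -/
def eulerOp (f : LaurentSeries A) : LaurentSeries A where
  coeff m := m • f.coeff m
  isPWO_support' :=
    f.isPWO_support.mono (Function.support_smul_subset_right (fun m : ℤ => m) f.coeff)

theorem eulerOp_coeff (f : LaurentSeries A) (m : ℤ) : (eulerOp f).coeff m = m • f.coeff m := rfl

theorem eulerOp_mul (f g : LaurentSeries A) : eulerOp (f * g) = eulerOp f * g + f * eulerOp g := by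
  have hsupp (h : LaurentSeries A) : (eulerOp h).support ⊆ h.support :=
    Function.support_smul_subset_right (fun m : ℤ => m) h.coeff
  ext m
  rw [coeff_add, coeff_mul_left' f.isPWO_support (hsupp f),
    coeff_mul_right' g.isPWO_support (hsupp g), eulerOp_coeff, coeff_mul, smul_sum,
    ← sum_add_distrib]
  refine sum_congr rfl fun ij hij => ?_
  rw [eulerOp_coeff, eulerOp_coeff, smul_mul_assoc, mul_smul_comm, ← add_smul,
    (mem_antidiagonal.1 hij).2.2]

theorem derivZ_eq_neg_single_mul_eulerOp (f : LaurentSeries A) :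
    derivZ f = -(single 1 1 * eulerOp f) := by
  ext m
  obtain ⟨j, rfl⟩ : ∃ j, m = j + 1 := ⟨m - 1, by ring⟩
  rw [coeff_neg, coeff_single_mul_add, one_mul, eulerOp_coeff, derivZ_coeff, add_sub_cancel_right,
    ← neg_smul]
  ring_nf

theorem derivZ_mul (f g : LaurentSeries A) : derivZ (f * g) = derivZ f * g + f * derivZ g := by
  simp only [derivZ_eq_neg_single_mul_eulerOp, eulerOp_mul]
  ring

theorem iterate_derivZ_mul (f g : LaurentSeries A) (n : ℕ) :
    derivZ^[n] (f * g) =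
      ∑ i ∈ range (n + 1), n.choose i • (derivZ^[i] f * derivZ^[n - i] g) :=
  (AddMonoidHom.mk' derivZ derivZ_add).iterate_map_mul_of_leibniz derivZ_mul n f g

theorem derivZ_pow_succ (f : LaurentSeries A) (n : ℕ) :
    derivZ (f ^ (n + 1)) = (n + 1) • (f ^ n * derivZ f) := by
  induction n with
  | zero => simp
  | succ n ih =>
    rw [pow_succ, derivZ_mul, ih, succ_nsmul _ (n + 1)]
    ring

theorem coeff_one_single_neg_mul_one_add_derivZ (ε : LaurentSeries A) (k : ℕ) :
    (single (-k : ℤ) 1 * (1 + derivZ ε)).coeff 1 = (-k : ℤ) • ε.coeff k := by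
  have h := coeff_single_mul_add (r := (1 : A)) (x := 1 + derivZ ε) (a := (k + 1 : ℤ))
    (b := -k)
  rw [add_neg_cancel_comm, one_mul] at h
  rw [h, coeff_add, coeff_one, if_neg (by omega), zero_add, derivZ_coeff, add_sub_cancel_right,
    show (1 : ℤ) - (k + 1) = -k by ring]

variable [Algebra ℚ A]

theorem derivZ_qsmul (q : ℚ) (f : LaurentSeries A) : derivZ (q • f) = q • derivZ f := by
  ext m
  simp only [derivZ_coeff, coeff_smul, smul_comm q]

end derivZ

section Taylor

variable [CommRing A] [Algebra ℚ A]

/-- The `r`-th term `ε^r/r! · f^{(r)}` of the Taylor expansion of `f(z + ε)`. -/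
def taylorTerm (ε f : LaurentSeries A) (r : ℕ) : LaurentSeries A :=
  ((r.factorial : ℚ))⁻¹ • (ε ^ r * derivZ^[r] f)

theorem taylorTerm_zero (ε f : LaurentSeries A) : taylorTerm ε f 0 = f := by
  simp [taylorTerm]

theorem coe_add_le_orderTop_taylorTerm {ε f : LaurentSeries A} {a : ℤ} (hε : 0 ≤ ε.orderTop)
    (hf : (a : WithTop ℤ) ≤ f.orderTop) (r : ℕ) :
    ((a + r : ℤ) : WithTop ℤ) ≤ (taylorTerm ε f r).orderTop := by
  have hεr : ((0 : ℤ) : WithTop ℤ) ≤ (ε ^ r).orderTop :=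
    (nsmul_nonneg hε r).trans orderTop_nsmul_le_orderTop_pow
  simpa [taylorTerm] using
    (coe_add_le_orderTop_mul hεr (coe_add_le_orderTop_iterate_derivZ hf r)).trans
      (orderTop_le_orderTop_smul _ _)

theorem taylorTerm_mul (ε f g : LaurentSeries A) (r : ℕ) :
    taylorTerm ε (f * g) r =
      ∑ i ∈ range (r + 1), taylorTerm ε f i * taylorTerm ε g (r - i) := by
  rw [taylorTerm, iterate_derivZ_mul, mul_sum, smul_sum]
  refine sum_congr rfl fun i hi => ?_
  have hir : i ≤ r := Nat.lt_succ_iff.1 (mem_range.1 hi)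
  rw [taylorTerm, taylorTerm, smul_mul_smul_comm, mul_smul_comm, ← Nat.cast_smul_eq_nsmul ℚ,
    smul_smul, ← pow_mul_pow_sub ε hir, Nat.cast_choose ℚ hir]
  congr 1
  · field_simp
  · ring

theorem IsSumOf.mul_taylorTerm {ε f g F G : LaurentSeries A} {a b : ℤ} (hε : 0 ≤ ε.orderTop)
    (hf : (a : WithTop ℤ) ≤ f.orderTop) (hg : (b : WithTop ℤ) ≤ g.orderTop)
    (hF : IsSumOf F (taylorTerm ε f)) (hG : IsSumOf G (taylorTerm ε g)) :
    IsSumOf (F * G) (taylorTerm ε (f * g)) := by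
  simpa only [← taylorTerm_mul] using
    hF.mul hG (coe_add_le_orderTop_taylorTerm hε hf) (coe_add_le_orderTop_taylorTerm hε hg)

theorem derivZ_smul_pow_succ_mul_iterate_derivZ (ε f : LaurentSeries A) (r : ℕ) :
    derivZ ((((r + 1).factorial : ℚ))⁻¹ • (ε ^ (r + 1) * derivZ^[r] f)) =
      taylorTerm ε f r * derivZ ε + taylorTerm ε f (r + 1) := by
  rw [derivZ_qsmul, derivZ_mul, derivZ_pow_succ, smul_add, taylorTerm, taylorTerm,
    Function.iterate_succ_apply', ← Nat.cast_smul_eq_nsmul ℚ, smul_mul_assoc, smul_smul,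
    smul_mul_assoc]
  congr 2
  · push_cast [Nat.factorial_succ]
    field_simp
  · ring

theorem sum_taylorTerm_mul_one_add_derivZ (ε f : LaurentSeries A) (n : ℕ) :
    (∑ r ∈ range n, taylorTerm ε f r) * (1 + derivZ ε) =
      f + derivZ (∑ r ∈ range n,
        (((r + 1).factorial : ℚ))⁻¹ • (ε ^ (r + 1) * derivZ^[r] f)) -
        taylorTerm ε f n := by
  induction n with
  | zero => simp [taylorTerm_zero, derivZ_zero]
  | succ n ih =>
    rw [sum_range_succ, sum_range_succ, add_mul, ih, derivZ_add,
      derivZ_smul_pow_succ_mul_iterate_derivZ]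
    ring

/-- Change of variables for residues: `Res f(z + ε) · (1 + ε') = Res f`. -/
theorem IsSumOf.coeff_one_mul_one_add_derivZ {ε f g : LaurentSeries A} {a : ℤ}
    (hg : IsSumOf g (taylorTerm ε f)) (hε : 0 ≤ ε.orderTop)
    (hf : (a : WithTop ℤ) ≤ f.orderTop) :
    (g * (1 + derivZ ε)).coeff 1 = f.coeff 1 := by
  have hterm (r : ℕ) : (a : WithTop ℤ) ≤ (taylorTerm ε f r).orderTop :=
    (WithTop.coe_le_coe.2 (by omega)).trans (coe_add_le_orderTop_taylorTerm hε hf r)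
  obtain ⟨n, hgn, hn⟩ := ((hg.eventually_coe_le_orderTop_sub hterm 2).and
    (eventually_ge_atTop (2 - a).toNat)).exists
  have hL' : ((0 : ℤ) : WithTop ℤ) ≤ (1 + derivZ ε).orderTop := by
    refine le_orderTop_iff_forall.2 fun j hj => ?_
    have hj : j < 0 := WithTop.coe_lt_coe.1 hj
    rw [coeff_add, coeff_one, if_neg hj.ne, zero_add, derivZ_coeff,
      coeff_eq_zero_of_lt_orderTop ((WithTop.coe_lt_coe.2 (by omega)).trans_le hε), smul_zero]
  have hdiff : ((g - ∑ r ∈ range n, taylorTerm ε f r) * (1 + derivZ ε)).coeff 1 = 0 :=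
    coeff_eq_zero_of_lt_orderTop ((WithTop.coe_lt_coe.2 (by omega)).trans_le
      (coe_add_le_orderTop_mul hgn hL'))
  rw [sub_mul, coeff_sub, sub_eq_zero, sum_taylorTerm_mul_one_add_derivZ] at hdiff
  rw [hdiff, coeff_sub, coeff_add, derivZ_coeff_one, coeff_eq_zero_of_lt_orderTop
    ((WithTop.coe_lt_coe.2 (by omega)).trans_le (coe_add_le_orderTop_taylorTerm hε hf n))]
  simp

end Taylor

/-- Let `H(z) = z - Σ_{j≥2} B_j z^{1-j}` and
`L(ζ) = ζ + Σ_{j≥2} R_j ζ^{1-j}` be formal series at infinity over a commutative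
`ℚ`-algebra `A` which are compositional inverses of each other, i.e.
`H(L(ζ)) = Σ_{r≥0} (L(ζ)-ζ)^r/r! · H^{(r)}(ζ) = ζ`.  (Series at infinity are modeled
as Laurent series in `w = 1/z`, so `z` is `HahnSeries.single (-1) 1`, the coefficient
of `z^n` is `coeff (-n)`, and the residue `[z^{-1}]` is `coeff 1`.)
Then for every `k ≥ 1`, `R_{k+1} = -(1/k) · [z^{-1}] H(z)^k`. -/
theorem free_cumulant_residue_formula [CommRing A] [Algebra ℚ A]
    (B R : ℕ → A) (H L : LaurentSeries A)
    (hH : ∀ m : ℤ, H.coeff m =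
      if m = -1 then 1 else if 1 ≤ m then -B (m + 1).toNat else 0)
    (hL : ∀ m : ℤ, L.coeff m =
      if m = -1 then 1 else if 1 ≤ m then R (m + 1).toNat else 0)
    (hcomp : IsSumOf (HahnSeries.single (-1) 1)
      (fun r => ((Nat.factorial r : ℚ))⁻¹ •
        ((L - HahnSeries.single (-1) 1) ^ r * derivZ^[r] H)))
    (k : ℕ) (hk : 1 ≤ k) :
    R (k + 1) = -((k : ℚ))⁻¹ • (H ^ k).coeff 1 := by
  set ζ : LaurentSeries A := single (-1) 1
  set ε := L - ζ
  have hεcoeff (m : ℤ) (hm : m ≠ -1) : ε.coeff m = L.coeff m := by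
    simp [ε, ζ, hm]
  have hε : 0 ≤ ε.orderTop := le_orderTop_iff_forall.2 fun j hj => by
    have hj : j < 0 := WithTop.coe_lt_coe.1 hj
    by_cases hj1 : j = -1
    · simp [ε, ζ, hj1, hL]
    · rw [hεcoeff j hj1, hL, if_neg hj1, if_neg (by omega)]
  have hHk (j : ℕ) : ((-j : ℤ) : WithTop ℤ) ≤ (H ^ j).orderTop := by
    have hH : ((-1 : ℤ) : WithTop ℤ) ≤ H.orderTop := le_orderTop_iff_forall.2 fun m hm => by
      have hm : m < -1 := WithTop.coe_lt_coe.1 hm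
      rw [hH, if_neg hm.ne, if_neg (by omega)]
    simpa using (nsmul_le_nsmul_right hH j).trans orderTop_nsmul_le_orderTop_pow
  have hcomp' : IsSumOf ζ (taylorTerm ε H) := hcomp
  have hpow : IsSumOf (ζ ^ k) (taylorTerm ε (H ^ k)) := by
    induction k, hk using Nat.le_induction with
    | base => simpa using hcomp'
    | succ j _ ih =>
      simpa [pow_succ] using ih.mul_taylorTerm hε (hHk j) (hHk 1) (by simpa using hcomp')
  have hres := hpow.coeff_one_mul_one_add_derivZ hε (hHk k)
  rw [show ζ ^ k = single (-k : ℤ) 1 by simp [ζ, single_pow],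
    coeff_one_single_neg_mul_one_add_derivZ, hεcoeff k (by omega), hL,
    if_neg (by omega), if_pos (by omega), show ((k : ℤ) + 1).toNat = k + 1 by omega] at hres
  have hk0 : (k : ℚ) ≠ 0 := by positivity
  rw [← hres, ← Int.cast_smul_eq_zsmul ℚ, smul_smul,
    show -(k : ℚ)⁻¹ * ((-k : ℤ) : ℚ) = 1 by push_cast; field_simp, one_smul]
end
end

section
/- Kerov polynomial for k = 3: let A be a commutative ℚ-algebra, R_2, R_3, … ∈ A, L(ζ) = ζ + Σ_{j≥2} R_j ζ^{1-j}, H the compositional inverse of L, and Σ_k := -(1/k) [z^{-1}] H(z) H(z-1) ⋯ H(z-k+1). Then Σ_3 = R_4 + R_2. -/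
noncomputable section

variable {A : Type*}

/-!
Every series involved has the shape `z + O(1)`, so only finitely many coefficients enter. Writing
`H = z + h₁ z⁻¹ + h₂ z⁻² + h₃ z⁻³ + ⋯`, Taylor expansion gives the coefficients of `H(z - j)` up to
`z⁻³`, and multiplying out shows that the `z⁻¹`-coefficient of `H(z) H(z-1) H(z-2)` is
`3 (h₁² + h₁ + h₃)`. Comparing the coefficients of `z⁻¹` and `z⁻³` in `H(L(ζ)) = ζ` gives
`h₁ = -R₂` and `h₃ = R₂ h₁ - R₄`, hence `Σ₃ = -(h₁² + h₁ + h₃) = R₄ + R₂`.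
-/

open Finset HahnSeries

theorem LaurentSeries.coeff_mul_eq_sum_range [CommRing A] {f g : LaurentSeries A} {a b : ℤ}
    (hf : (a : WithTop ℤ) ≤ f.orderTop) (hg : (b : WithTop ℤ) ≤ g.orderTop) (k : ℤ) :
    (f * g).coeff k =
      ∑ r ∈ range (k - a - b + 1).toNat, f.coeff (a + r) * g.coeff (k - a - r) := by
  rw [le_orderTop_iff_forall] at hf hg
  have hIcc : ∑ r ∈ range (k - a - b + 1).toNat, f.coeff (a + r) * g.coeff (k - a - r) =
      ∑ i ∈ Icc a (k - b), f.coeff i * g.coeff (k - i) := by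
    rw [Int.Icc_eq_finset_map, sum_map, show k - b + 1 - a = k - a - b + 1 by ring]
    exact sum_congr rfl fun r _ => by simp [sub_sub]
  rw [hIcc, coeff_mul]
  refine sum_bij_ne_zero (fun ij _ _ => ij.1) ?_ ?_ ?_ ?_
  · intro ij hij hne
    rw [Finset.mem_antidiagonal] at hij
    have h1 : a ≤ ij.1 := not_lt.1 fun h => hij.1 (hf _ (mod_cast h))
    have h2 : b ≤ ij.2 := not_lt.1 fun h => hij.2.1 (hg _ (mod_cast h))
    exact mem_Icc.2 ⟨h1, by omega⟩
  · intro ij hij _ ij' hij' _ h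
    rw [Finset.mem_antidiagonal] at hij hij'
    exact Prod.ext h (by omega)
  · intro i _ hne
    refine ⟨(i, k - i), ?_, ?_, rfl⟩
    · exact Finset.mem_antidiagonal.2 ⟨left_ne_zero_of_mul hne, right_ne_zero_of_mul hne, by ring⟩
    · simpa using hne
  · intro ij hij _
    rw [Finset.mem_antidiagonal] at hij
    rw [← hij.2.2, add_sub_cancel_left]

theorem coeff_derivZ [CommRing A] (f : LaurentSeries A) (m : ℤ) :
    (derivZ f).coeff m = (1 - m) • f.coeff (m - 1) := rfl

theorem coeff_derivZ_iterate [CommRing A] (f : LaurentSeries A) (r : ℕ) (m : ℤ) :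
    (derivZ^[r] f).coeff m = (∏ i ∈ range r, ((i : ℤ) + 1 - m)) • f.coeff (m - r) := by
  induction r generalizing m with
  | zero => simp
  | succ r ih =>
    rw [Function.iterate_succ_apply', coeff_derivZ, ih, smul_smul, prod_range_succ']
    congr 1
    · rw [mul_comm]
      congr 1
      exact prod_congr rfl fun i _ => by push_cast; ring
    · push_cast; ring_nf

theorem le_orderTop_derivZ_iterate [CommRing A] {f : LaurentSeries A} {a : ℤ}
    (hf : (a : WithTop ℤ) ≤ f.orderTop) (r : ℕ) :
    ((a + r : ℤ) : WithTop ℤ) ≤ (derivZ^[r] f).orderTop := by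
  rw [le_orderTop_iff_forall] at hf ⊢
  intro m hm
  have hm : m < a + r := WithTop.coe_lt_coe.1 hm
  rw [coeff_derivZ_iterate, hf _ (WithTop.coe_lt_coe.2 (by omega)), smul_zero]

theorem IsSumOf.coeff_eq_sum_range [CommRing A] {g : LaurentSeries A} {F : ℕ → LaurentSeries A}
    (h : IsSumOf g F) {m : ℤ} {N : ℕ} (hF : ∀ r, N ≤ r → (F r).coeff m = 0) :
    g.coeff m = ∑ r ∈ range N, (F r).coeff m := by
  obtain ⟨N', hN'⟩ := h m
  rw [hN' (N' + N) (Nat.le_add_right _ _), coeff_sum]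
  refine (sum_subset (range_subset_range.2 (Nat.le_add_left _ _)) fun r _ hr => ?_).symm
  exact hF r (not_lt.1 (mem_range.not.1 hr))

theorem IsSumOf.coeff_taylor_eq_sum [CommRing A] [Algebra ℚ A] {G H : LaurentSeries A} {c : ℚ}
    (hH : ((-1 : ℤ) : WithTop ℤ) ≤ H.orderTop)
    (hG : IsSumOf G fun r => (c ^ r / (Nat.factorial r : ℚ)) • derivZ^[r] H) (m : ℤ) :
    G.coeff m = ∑ r ∈ range (m + 2).toNat,
      (c ^ r / r.factorial * ∏ i ∈ range r, ((i : ℚ) + 1 - m)) • H.coeff (m - r) := by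
  rw [le_orderTop_iff_forall] at hH
  have hterm : ∀ r : ℕ, ((c ^ r / (Nat.factorial r : ℚ)) • derivZ^[r] H).coeff m =
      (c ^ r / r.factorial * ∏ i ∈ range r, ((i : ℚ) + 1 - m)) • H.coeff (m - r) := by
    intro r
    rw [coeff_smul, coeff_derivZ_iterate, ← Int.cast_smul_eq_zsmul ℚ, smul_smul]
    push_cast
    rfl
  rw [hG.coeff_eq_sum_range (N := (m + 2).toNat) fun r hr => ?_]
  · exact sum_congr rfl fun r _ => hterm r
  · rw [hterm, hH _ (WithTop.coe_lt_coe.2 (by omega)), smul_zero]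

theorem IsSumOf.orderTop_taylor [CommRing A] [Algebra ℚ A] {G H : LaurentSeries A} {c : ℚ}
    (hH : ((-1 : ℤ) : WithTop ℤ) ≤ H.orderTop)
    (hG : IsSumOf G fun r => (c ^ r / (Nat.factorial r : ℚ)) • derivZ^[r] H) :
    ((-1 : ℤ) : WithTop ℤ) ≤ G.orderTop := by
  refine le_orderTop_iff_forall.2 fun m hm => ?_
  have hm : m < -1 := WithTop.coe_lt_coe.1 hm
  rw [hG.coeff_taylor_eq_sum hH, show (m + 2).toNat = 0 by omega, sum_range_zero]

theorem IsSumOf.coeff_taylor_le_three [CommRing A] [Algebra ℚ A] {G H : LaurentSeries A} {c : ℚ}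
    (hH : ((-1 : ℤ) : WithTop ℤ) ≤ H.orderTop)
    (hG : IsSumOf G fun r => (c ^ r / (Nat.factorial r : ℚ)) • derivZ^[r] H) :
    G.coeff (-1) = H.coeff (-1) ∧ G.coeff 0 = H.coeff 0 + c • H.coeff (-1) ∧
    G.coeff 1 = H.coeff 1 ∧ G.coeff 2 = H.coeff 2 - c • H.coeff 1 ∧
    G.coeff 3 = H.coeff 3 - (2 * c) • H.coeff 2 + c ^ 2 • H.coeff 1 := by
  simp only [hG.coeff_taylor_eq_sum hH]
  refine ⟨?_, ?_, ?_, ?_, ?_⟩ <;> simp [sum_range_succ, prod_range_succ] <;> module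

theorem IsSumOf.coeff_one_three_of_comp [CommRing A] [Algebra ℚ A] {H M : LaurentSeries A}
    (hH : ((-1 : ℤ) : WithTop ℤ) ≤ H.orderTop) (hM : ((1 : ℤ) : WithTop ℤ) ≤ M.orderTop)
    (h : IsSumOf (single (-1) 1) fun s => ((Nat.factorial s : ℚ))⁻¹ • (M ^ s * derivZ^[s] H)) :
    H.coeff 1 + M.coeff 1 * H.coeff (-1) = 0 ∧
    H.coeff 3 - M.coeff 1 * H.coeff 1 + M.coeff 3 * H.coeff (-1) = 0 := by
  have hMpow : ∀ s : ℕ, ((s : ℤ) : WithTop ℤ) ≤ (M ^ s).orderTop := fun s =>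
    calc ((s : ℤ) : WithTop ℤ) = s • ((1 : ℤ) : WithTop ℤ) := by simp
      _ ≤ s • M.orderTop := nsmul_le_nsmul_right hM s
      _ ≤ (M ^ s).orderTop := orderTop_nsmul_le_orderTop_pow
  -- the `s`-th term has order `≥ 2s - 1`, so only `s ≤ 2` reach the coefficients `1, 2, 3`
  have hterm : ∀ s : ℕ, (((s : ℤ) + (-1 + s) : ℤ) : WithTop ℤ) ≤ (M ^ s * derivZ^[s] H).orderTop :=
    fun s => by
      rw [WithTop.coe_add]
      exact (add_le_add (hMpow s) (le_orderTop_derivZ_iterate hH s)).trans orderTop_add_le_mul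
  have hsum : ∀ m : ℤ, 1 ≤ m → m ≤ 3 → H.coeff m + (M * derivZ H).coeff m +
      (2⁻¹ : ℚ) • (M ^ 2 * derivZ^[2] H).coeff m = 0 := by
    intro m hm1 hm3
    have h := h.coeff_eq_sum_range (m := m) (N := 3) fun s hs => by
      rw [coeff_smul, coeff_eq_zero_of_lt_orderTop ((WithTop.coe_lt_coe.2 (by omega)).trans_le
        (hterm s)), smul_zero]
    rw [coeff_single, if_neg (by omega)] at h
    simpa [sum_range_succ, add_assoc] using h.symm
  have hM1 := LaurentSeries.coeff_mul_eq_sum_range (hMpow 1) (le_orderTop_derivZ_iterate hH 1)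
  have hM2 := LaurentSeries.coeff_mul_eq_sum_range (hMpow 2) (le_orderTop_derivZ_iterate hH 2)
  simp only [pow_one, Function.iterate_one, Nat.cast_one, Nat.cast_ofNat] at hM1 hM2
  have h₁ := hsum 1 le_rfl (by norm_num)
  have h₃ := hsum 3 (by norm_num) le_rfl
  rw [hM1, hM2] at h₁ h₃
  simp [sum_range_succ, coeff_derivZ] at h₁ h₃
  exact ⟨h₁, by linear_combination h₃⟩

theorem coeff_one_prod_range_three_taylor [CommRing A] [Algebra ℚ A] {H : LaurentSeries A}
    {G : ℕ → LaurentSeries A} (hH : ((-1 : ℤ) : WithTop ℤ) ≤ H.orderTop)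
    (hlead : H.coeff (-1) = 1) (hconst : H.coeff 0 = 0)
    (hG : ∀ j : ℕ, IsSumOf (G j) fun r => ((-(j : ℚ)) ^ r / (Nat.factorial r : ℚ)) • derivZ^[r] H) :
    (∏ j ∈ range 3, G j).coeff 1 = (3 : ℚ) • (H.coeff 1 ^ 2 + H.coeff 1 + H.coeff 3) := by
  have hGord := fun j => (hG j).orderTop_taylor hH
  have hG01 : (((-1 : ℤ) + -1 : ℤ) : WithTop ℤ) ≤ (G 0 * G 1).orderTop :=
    (add_le_add (hGord 0) (hGord 1)).trans orderTop_add_le_mul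
  obtain ⟨a₁, a₂, a₃, a₄, a₅⟩ := (hG 0).coeff_taylor_le_three hH
  obtain ⟨b₁, b₂, b₃, b₄, b₅⟩ := (hG 1).coeff_taylor_le_three hH
  obtain ⟨c₁, c₂, c₃, c₄, c₅⟩ := (hG 2).coeff_taylor_le_three hH
  rw [prod_range_succ, prod_range_succ, prod_range_one,
    LaurentSeries.coeff_mul_eq_sum_range hG01 (hGord 2)]
  simp [sum_range_succ, LaurentSeries.coeff_mul_eq_sum_range (hGord 0) (hGord 1), a₁, a₂, a₃, a₄,
    a₅, b₁, b₂, b₃, b₄, b₅, c₁, c₂, c₃, c₄, c₅, hlead, hconst, Algebra.smul_def, map_ofNat]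
  ring

/-- Kerov polynomial for `k = 3`: over a commutative `ℚ`-algebra `A`
with `R_2, R_3, … ∈ A`, `L(ζ) = ζ + Σ_{j≥2} R_j ζ^{1-j}`, `H` the compositional
inverse of `L` (so `H(L(ζ)) = ζ`), and
`Σ_k = -(1/k)[z^{-1}] H(z) H(z-1) ⋯ H(z-k+1)` where
`H(z-j) = Σ_{r≥0} ((-j)^r/r!) H^{(r)}(z)`, one has `Σ_3 = R_4 + R_2` (in informal
notation). -/
theorem kerov_polynomial_three [CommRing A] [Algebra ℚ A]
    (B R : ℕ → A) (H L : LaurentSeries A) (Hshift : ℕ → LaurentSeries A)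
    (hH : ∀ m : ℤ, H.coeff m =
      if m = -1 then 1 else if 1 ≤ m then -B (m + 1).toNat else 0)
    (hL : ∀ m : ℤ, L.coeff m =
      if m = -1 then 1 else if 1 ≤ m then R (m + 1).toNat else 0)
    (hcomp : IsSumOf (HahnSeries.single (-1) 1)
      (fun s => ((Nat.factorial s : ℚ))⁻¹ •
        ((L - HahnSeries.single (-1) 1) ^ s * derivZ^[s] H)))
    (hHshift : ∀ j : ℕ, IsSumOf (Hshift j)
      (fun r => ((-(j : ℚ)) ^ r / (Nat.factorial r : ℚ)) • derivZ^[r] H)) :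
    -((3 : ℚ))⁻¹ • (∏ j ∈ Finset.range 3, Hshift j).coeff 1 = R 4 + R 2 := by
  have hHord : ((-1 : ℤ) : WithTop ℤ) ≤ H.orderTop :=
    le_orderTop_iff_forall.2 fun m hm => by
      have hm : m < -1 := WithTop.coe_lt_coe.1 hm
      rw [hH, if_neg (by omega), if_neg (by omega)]
  have hLord : ((1 : ℤ) : WithTop ℤ) ≤ (L - single (-1) 1).orderTop :=
    le_orderTop_iff_forall.2 fun m hm => by
      have hm : m < 1 := WithTop.coe_lt_coe.1 hm
      by_cases h : m = -1 <;> simp [hL, h, show ¬ 1 ≤ m by omega]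
  have hlead : H.coeff (-1) = 1 := by simp [hH]
  obtain ⟨hcomp₁, hcomp₃⟩ := hcomp.coeff_one_three_of_comp hHord hLord
  have hH₁ : H.coeff 1 + R 2 = 0 := by simpa [hL, hlead] using hcomp₁
  have hH₃ : H.coeff 3 - R 2 * H.coeff 1 + R 4 = 0 := by simpa [hL, hlead] using hcomp₃
  rw [coeff_one_prod_range_three_taylor hHord hlead (by simp [hH]) hHshift, smul_smul]
  norm_num
  linear_combination -(H.coeff 1 + 1) * hH₁ - hH₃
end
end
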